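/- arXiv:0711.2928 — 2 statements merged into one kernel-verified Lean document; each statement's English description precedes it below -/
import Mathlib

section
/- Let G be a group, γ ∈ G a central element, and p : G → ℤ² a surjective homomorphism with finitely generated kernel K and p(γ) ≠ 0. Let q : ℤ² → ℤ² / ⟨p(γ)⟩ ≅ ℤ ⊕ ℤ/kℤ be the quotient map followed by this isomorphism, and let π : ℤ ⊕ ℤ/kℤ → ℤ be the projection. Then the kernel H of the composite map G/⟨γ⟩ → ℤ induced by π ∘ q ∘ p contains K·⟨γ⟩/⟨γ⟩ as a finite index subgroup, and hence H is finitely generated. -/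
theorem mySupFG {G : Type*} [Group G] {A B : Subgroup G} (hA : A.FG) (hB : B.FG) :
    (A ⊔ B).FG := by
  rw [Subgroup.fg_iff] at hA hB ⊢
  obtain ⟨S, hS, hSf⟩ := hA
  obtain ⟨T, hT, hTf⟩ := hB
  exact ⟨S ∪ T, by rw [Subgroup.closure_union, hS, hT], hSf.union hTf⟩

theorem myMapFG {G H : Type*} [Group G] [Group H] (f : G →* H) {A : Subgroup G} (hA : A.FG) :
    (A.map f).FG := by
  rw [Subgroup.fg_iff] at hA ⊢
  obtain ⟨S, hS, hSf⟩ := hA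
  exact ⟨f '' S, by rw [← MonoidHom.map_closure, hS], hSf.image f⟩

theorem myFGofFiniteIndex {H : Type*} [Group H] (N : Subgroup H) [N.FiniteIndex]
    (hN : N.FG) : Group.FG H := by
  obtain ⟨S, hS⟩ := hN
  rw [Group.fg_iff]
  refine ⟨↑S ∪ Set.range (fun q : H ⧸ N => q.out), ?_,
    S.finite_toSet.union (Set.finite_range _)⟩
  rw [eq_top_iff]
  intro h _
  set t := (QuotientGroup.mk h : H ⧸ N).out with ht
  have h1 : (QuotientGroup.mk t : H ⧸ N) = QuotientGroup.mk h := Quotient.out_eq _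
  have h2 : t⁻¹ * h ∈ N := (QuotientGroup.eq).mp h1
  have h3 : t ∈ Subgroup.closure (↑S ∪ Set.range (fun q : H ⧸ N => q.out)) :=
    Subgroup.subset_closure (Or.inr ⟨QuotientGroup.mk h, rfl⟩)
  have h4 : t⁻¹ * h ∈ Subgroup.closure (↑S ∪ Set.range (fun q : H ⧸ N => q.out)) := by
    have hle : N ≤ Subgroup.closure (↑S ∪ Set.range (fun q : H ⧸ N => q.out)) := by
      rw [← hS]; exact Subgroup.closure_mono Set.subset_union_left
    exact hle h2
  simpa using mul_mem h3 h4

/-- With `p : G → ℤ²` surjective with finitely generated kernel `K`,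
`γ` central with `p γ ≠ 1`, `e : ℤ²/⟨p γ⟩ ≅ ℤ ⊕ ℤ/kℤ`, and `f : G/⟨γ⟩ → ℤ` the map
induced by the projection composed with `e` and the quotient of `p`, the kernel `H`
of `f` contains `K·⟨γ⟩/⟨γ⟩` as a finite index subgroup, and `H` is finitely generated. -/
theorem stmt_1 {G : Type*} [Group G] (γ : G) (hγ : γ ∈ Subgroup.center G)
    [(Subgroup.zpowers γ).Normal]
    (p : G →* Multiplicative (ℤ × ℤ)) (hp : Function.Surjective p)
    (hK : p.ker.FG) (hpγ : p γ ≠ 1) (k : ℕ)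
    (e : (Multiplicative (ℤ × ℤ) ⧸ Subgroup.zpowers (p γ)) ≃* Multiplicative (ℤ × ZMod k))
    (f : (G ⧸ Subgroup.zpowers γ) →* Multiplicative ℤ)
    (hf : ∀ g : G, f (QuotientGroup.mk g) =
      (AddMonoidHom.toMultiplicative (AddMonoidHom.fst ℤ (ZMod k)))
        (e (QuotientGroup.mk (p g)))) :
    Subgroup.map (QuotientGroup.mk' (Subgroup.zpowers γ)) (p.ker ⊔ Subgroup.zpowers γ) ≤ f.ker ∧
    ((Subgroup.map (QuotientGroup.mk' (Subgroup.zpowers γ))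
      (p.ker ⊔ Subgroup.zpowers γ)).subgroupOf f.ker).FiniteIndex ∧
    f.ker.FG := by
  set S : Subgroup G := p.ker ⊔ Subgroup.zpowers γ with hSdef
  set L : Subgroup (G ⧸ Subgroup.zpowers γ) :=
    Subgroup.map (QuotientGroup.mk' (Subgroup.zpowers γ)) S with hLdef
  have hcomap : S = Subgroup.comap p (Subgroup.zpowers (p γ)) := by
    rw [← MonoidHom.map_zpowers p γ, Subgroup.comap_map_eq, sup_comm]
  have hmemS : ∀ g : G, g ∈ S ↔
      (QuotientGroup.mk (p g) : Multiplicative (ℤ × ℤ) ⧸ Subgroup.zpowers (p γ)) = 1 := by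
    intro g
    rw [hcomap, Subgroup.mem_comap, ← QuotientGroup.eq_one_iff]
  have hγS : Subgroup.zpowers γ ≤ S := le_sup_right
  have hL : ∀ g : G, (QuotientGroup.mk g : G ⧸ Subgroup.zpowers γ) ∈ L ↔ g ∈ S := by
    intro g
    constructor
    · rintro ⟨g', hg', hgg⟩
      simp only [QuotientGroup.mk'_apply] at hgg
      have h2 : g'⁻¹ * g ∈ Subgroup.zpowers γ := (QuotientGroup.eq).mp hgg
      have := mul_mem hg' (hγS h2)
      simpa using this
    · intro hg
      exact ⟨g, hg, rfl⟩
  have part1 : L ≤ f.ker := by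
    rintro x ⟨g, hg, rfl⟩
    rw [MonoidHom.mem_ker]
    show f (QuotientGroup.mk g) = 1
    rw [hf g, (hmemS g).mp hg]
    simp
  have hk0 : k ≠ 0 := by
    rintro rfl
    let ψ : Multiplicative (ℤ × ℤ) →* Multiplicative (ℤ × ℤ) :=
      (e.toMonoidHom : _ →* Multiplicative (ℤ × ZMod 0)).comp
        (QuotientGroup.mk' (Subgroup.zpowers (p γ)))
    have hsurj : Function.Surjective ψ :=
      e.surjective.comp (QuotientGroup.mk'_surjective _)
    let φ : (ℤ × ℤ) →+ (ℤ × ℤ) := MonoidHom.toAdditive ψ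
    have hφs : Function.Surjective φ := hsurj
    have hinj := IsNoetherian.injective_of_surjective_endomorphism φ.toIntLinearMap hφs
    have h1 : φ ((p γ).toAdd) = 0 := by
      have hmk : (QuotientGroup.mk (p γ) : _ ⧸ Subgroup.zpowers (p γ)) = 1 :=
        (QuotientGroup.eq_one_iff _).mpr (Subgroup.mem_zpowers _)
      have hψ1 : ψ (p γ) = 1 := by
        show e (QuotientGroup.mk (p γ)) = 1
        rw [hmk, map_one]
      show (ψ (p γ)).toAdd = 0
      rw [hψ1]
      rfl
    have h2 : (p γ).toAdd = (0 : ℤ × ℤ) := by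
      apply hinj
      simpa using h1
    exact hpγ (by simpa using h2)
  haveI : NeZero k := ⟨hk0⟩
  have hγker : Subgroup.zpowers γ ≤
      (e.toMonoidHom.comp ((QuotientGroup.mk' (Subgroup.zpowers (p γ))).comp p)).ker := by
    rw [Subgroup.zpowers_le]
    have hmk : (QuotientGroup.mk (p γ) : _ ⧸ Subgroup.zpowers (p γ)) = 1 :=
      (QuotientGroup.eq_one_iff _).mpr (Subgroup.mem_zpowers _)
    rw [MonoidHom.mem_ker, MonoidHom.comp_apply, MonoidHom.comp_apply]
    show e (QuotientGroup.mk (p γ)) = 1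
    rw [hmk, map_one]
  set Φ' := QuotientGroup.lift (Subgroup.zpowers γ)
    (e.toMonoidHom.comp ((QuotientGroup.mk' (Subgroup.zpowers (p γ))).comp p)) hγker with hΦ'
  set χ : ↥f.ker →* Multiplicative (ZMod k) :=
    ((AddMonoidHom.toMultiplicative (AddMonoidHom.snd ℤ (ZMod k))).comp Φ').comp
      f.ker.subtype with hχ
  have hker : χ.ker = L.subgroupOf f.ker := by
    ext x
    obtain ⟨x, hx⟩ := x
    obtain ⟨g, rfl⟩ := QuotientGroup.mk_surjective x
    have hfx : (e (QuotientGroup.mk (p g))).toAdd.1 = 0 := by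
      have h : f (QuotientGroup.mk g) = 1 := hx
      rw [hf g] at h
      simpa using h
    simp only [MonoidHom.mem_ker, Subgroup.mem_subgroupOf]
    rw [hL g]
    constructor
    · intro h
      have hsnd : (e (QuotientGroup.mk (p g))).toAdd.2 = 0 := by
        simpa [hχ, hΦ'] using h
      have hone : e (QuotientGroup.mk (p g)) = 1 := by
        have : (e (QuotientGroup.mk (p g))).toAdd = 0 := Prod.ext hfx hsnd
        simpa using this
      rw [hmemS g]
      apply e.injective
      simpa using hone
    · intro hg
      have h1 := (hmemS g).mp hg
      simp [hχ, hΦ', h1]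
  have hfi : (L.subgroupOf f.ker).FiniteIndex := by
    rw [← hker]
    exact Subgroup.finiteIndex_ker χ
  refine ⟨part1, hfi, ?_⟩
  have hLFG : L.FG := by
    apply myMapFG
    apply mySupFG hK
    exact ⟨{γ}, by simp [Subgroup.zpowers_eq_closure]⟩
  have hNFG : (L.subgroupOf f.ker).FG := by
    have e2 := Subgroup.subgroupOfEquivOfLe part1
    have hLg : Group.FG ↥L := (Group.fg_iff_subgroup_fg L).mpr hLFG
    have := Group.fg_of_surjective (f := e2.symm.toMonoidHom) e2.symm.surjective
    exact (Group.fg_iff_subgroup_fg _).mp this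
  have := myFGofFiniteIndex (L.subgroupOf f.ker) hNFG
  exact (Group.fg_iff_subgroup_fg f.ker).mp this
end

section
/- Let ‖·‖ be a seminorm on a finite-dimensional real vector space V that takes integer values on a full lattice L ⊂ V. If ‖·‖ vanishes on some nonzero vector of L, then ‖·‖ vanishes on a rational subspace, i.e., the null space {v : ‖v‖ = 0} is spanned by its intersection with L ⊗ ℚ. -/
open scoped BigOperators

private lemma floor_eq_abs_lt {K : ℝ} (hK : 0 < K) {x y : ℝ}
    (h : ⌊x * K⌋ = ⌊y * K⌋) : |x - y| < 1 / K := by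
  have h1 := Int.floor_le (x * K)
  have h2 := Int.lt_floor_add_one (x * K)
  have h3 := Int.floor_le (y * K)
  have h4 := Int.lt_floor_add_one (y * K)
  rw [h] at h1 h2
  rw [abs_sub_lt_iff]
  constructor <;> rw [lt_div_iff₀ hK] <;> nlinarith

private lemma aux_dirichlet {ι : Type*} [Fintype ι] (c : ι → ℝ) (K : ℕ) (hK : 0 < K) :
    ∃ (Q : ℕ) (m : ι → ℤ), 0 < Q ∧ ∀ i, |(Q : ℝ) * c i - m i| < 1 / K := by
  classical
  have hK' : (0 : ℝ) < K := by exact_mod_cast hK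
  have hfr : ∀ (q : ℕ) (i : ι), (0 : ℝ) ≤ Int.fract ((q : ℝ) * c i) * K :=
    fun q i => mul_nonneg (Int.fract_nonneg _) hK'.le
  let f : Fin (K ^ Fintype.card ι + 1) → (ι → Fin K) := fun q i =>
    ⟨(⌊Int.fract ((q : ℝ) * c i) * K⌋).toNat, by
      have h1 : ⌊Int.fract ((q : ℝ) * c i) * K⌋ < (K : ℤ) := by
        apply Int.floor_lt.mpr
        push_cast
        nlinarith [Int.fract_lt_one ((q : ℝ) * c i)]
      exact (Int.toNat_lt' hK).mpr h1⟩
  obtain ⟨q₁, q₂, hne, hfeq⟩ := Fintype.exists_ne_map_eq_of_card_lt f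
    (by simp [Fintype.card_fun])
  have key : ∀ a b : Fin (K ^ Fintype.card ι + 1), (a : ℕ) < (b : ℕ) → f a = f b →
      ∃ (Q : ℕ) (m : ι → ℤ), 0 < Q ∧ ∀ i, |(Q : ℝ) * c i - m i| < 1 / K := by
    intro a b hab hfab
    refine ⟨(b : ℕ) - (a : ℕ),
      fun i => ⌊((b : ℕ) : ℝ) * c i⌋ - ⌊((a : ℕ) : ℝ) * c i⌋,
      Nat.sub_pos_of_lt hab, fun i => ?_⟩
    have hf1 : ⌊Int.fract (((a : ℕ) : ℝ) * c i) * K⌋ = ⌊Int.fract (((b : ℕ) : ℝ) * c i) * K⌋ := by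
      have hv : (f a i : ℕ) = (f b i : ℕ) := by rw [hfab]
      have h0a : 0 ≤ ⌊Int.fract (((a : ℕ) : ℝ) * c i) * K⌋ := Int.floor_nonneg.mpr (hfr _ i)
      have h0b : 0 ≤ ⌊Int.fract (((b : ℕ) : ℝ) * c i) * K⌋ := Int.floor_nonneg.mpr (hfr _ i)
      simp only [f] at hv
      omega
    have hfl : |Int.fract (((b : ℕ) : ℝ) * c i) - Int.fract (((a : ℕ) : ℝ) * c i)| < 1 / K :=
      floor_eq_abs_lt hK' hf1.symm
    have heq : ((((b : ℕ) - (a : ℕ) : ℕ)) : ℝ) * c i -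
        ((⌊((b : ℕ) : ℝ) * c i⌋ - ⌊((a : ℕ) : ℝ) * c i⌋ : ℤ) : ℝ) =
        Int.fract (((b : ℕ) : ℝ) * c i) - Int.fract (((a : ℕ) : ℝ) * c i) := by
      rw [Nat.cast_sub hab.le, Int.fract, Int.fract]
      push_cast
      ring
    rw [heq]
    exact hfl
  rcases (Fin.val_ne_of_ne hne).lt_or_gt with h | h
  · exact key q₁ q₂ h hfeq
  · exact key q₂ q₁ h hfeq.symm

private lemma seminorm_sum_le {V : Type*} [AddCommGroup V] [Module ℝ V]
    (p : Seminorm ℝ V) {ι : Type*} (s : Finset ι) (g : ι → V) :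
    p (∑ i ∈ s, g i) ≤ ∑ i ∈ s, p (g i) := by
  classical
  induction s using Finset.cons_induction with
  | empty => simp
  | cons a s ha ih =>
      rw [Finset.sum_cons, Finset.sum_cons]
      exact (map_add_le_add p _ _).trans (by linarith)

/-- The null space of a seminorm as a submodule. -/
private def nullSp {V : Type*} [AddCommGroup V] [Module ℝ V] (p : Seminorm ℝ V) :
    Submodule ℝ V where
  carrier := {v | p v = 0}
  zero_mem' := map_zero p
  add_mem' := by
    intro a c ha hc
    refine le_antisymm ?_ (apply_nonneg p _)
    calc p (a + c) ≤ p a + p c := map_add_le_add p a c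
      _ = 0 := by rw [Set.mem_setOf_eq.mp ha, Set.mem_setOf_eq.mp hc, add_zero]
  smul_mem' := by
    intro t x hx
    show p (t • x) = 0
    rw [map_smul_eq_mul, Set.mem_setOf_eq.mp hx, mul_zero]

/-- Let `p` be a seminorm on a finite-dimensional real vector space `V`
taking integer values on a full lattice `L` (the `ℤ`-span of a basis `b`).  If `p`
vanishes on some nonzero lattice vector, then the null space `{v : p v = 0}` is a
rational subspace: it is spanned by its rational points (vectors with rational
coordinates in the basis `b`). -/
theorem stmt_14 {V : Type*} [AddCommGroup V] [Module ℝ V] [FiniteDimensional ℝ V]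
    {ι : Type*} [Fintype ι] (b : Module.Basis ι ℝ V) (p : Seminorm ℝ V)
    (hint : ∀ v ∈ Submodule.span ℤ (Set.range b), ∃ n : ℤ, p v = n)
    (hvan : ∃ v ∈ Submodule.span ℤ (Set.range b), v ≠ 0 ∧ p v = 0) :
    {v : V | p v = 0} =
      ↑(Submodule.span ℝ ({v : V | p v = 0} ∩
        {v : V | ∃ c : ι → ℚ, v = ∑ i, (c i : ℝ) • b i})) := by
  classical
  set S : Set V := {v : V | p v = 0} ∩ {v : V | ∃ c : ι → ℚ, v = ∑ i, (c i : ℝ) • b i} with hS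
  -- key approximation step
  have approx : ∀ x : V, p x = 0 → ∀ ε : ℝ, 0 < ε →
      ∃ w ∈ S, ∀ i, |b.equivFun x i - b.equivFun w i| < ε := by
    intro x hx ε hε
    set c : ι → ℝ := b.equivFun x with hc
    set C : ℝ := ∑ i, p (b i) with hC
    have hC0 : 0 ≤ C := Finset.sum_nonneg fun i _ => apply_nonneg p _
    obtain ⟨K, hK⟩ := exists_nat_gt (max (1 / ε) C)
    have h1ε : 1 / ε < K := (le_max_left _ _).trans_lt hK
    have hCK : C < K := (le_max_right _ _).trans_lt hK
    have hK0' : (0 : ℝ) < K := lt_trans (by positivity) h1ε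
    have hK0 : 0 < K := by exact_mod_cast hK0'
    have hKε : 1 / (K : ℝ) < ε := by
      rw [div_lt_iff₀ hK0']
      rw [div_lt_iff₀ hε] at h1ε
      nlinarith
    obtain ⟨Q, m, hQ, hm⟩ := aux_dirichlet c K hK0
    have hQ0' : (0 : ℝ) < Q := by exact_mod_cast hQ
    set ℓ : V := b.equivFun.symm fun i => ((m i : ℝ)) with hℓ
    have hℓsum : ℓ = ∑ i, (m i : ℝ) • b i := b.equivFun_symm_apply _
    have hℓmem : ℓ ∈ Submodule.span ℤ (Set.range b) := by
      rw [hℓsum]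
      refine Submodule.sum_mem _ fun i _ => ?_
      rw [show (m i : ℝ) • b i = m i • b i from Int.cast_smul_eq_zsmul ℝ _ _]
      exact Submodule.smul_mem _ _ (Submodule.subset_span ⟨i, rfl⟩)
    -- bound p ℓ
    have hxQ : (Q : ℝ) • x = ∑ i, ((Q : ℝ) * c i) • b i := by
      conv_lhs => rw [← b.sum_equivFun x]
      rw [Finset.smul_sum]
      exact Finset.sum_congr rfl fun i _ => (smul_smul _ _ _)
    have hdiff : ℓ - (Q : ℝ) • x = ∑ i, ((m i : ℝ) - (Q : ℝ) * c i) • b i := by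
      rw [hℓsum, hxQ, ← Finset.sum_sub_distrib]
      exact Finset.sum_congr rfl fun i _ => (sub_smul _ _ _).symm
    have hpdiff : p (ℓ - (Q : ℝ) • x) ≤ C / K := by
      rw [hdiff]
      calc p (∑ i, ((m i : ℝ) - (Q : ℝ) * c i) • b i)
          ≤ ∑ i, p (((m i : ℝ) - (Q : ℝ) * c i) • b i) := seminorm_sum_le p _ _
        _ = ∑ i, |(m i : ℝ) - (Q : ℝ) * c i| * p (b i) := by
            exact Finset.sum_congr rfl fun i _ => by
              rw [map_smul_eq_mul, Real.norm_eq_abs]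
        _ ≤ ∑ i, (1 / (K : ℝ)) * p (b i) := by
            refine Finset.sum_le_sum fun i _ => ?_
            have : |(m i : ℝ) - (Q : ℝ) * c i| ≤ 1 / K := by
              rw [abs_sub_comm]; exact (hm i).le
            exact mul_le_mul_of_nonneg_right this (apply_nonneg p _)
        _ = C / K := by rw [← Finset.mul_sum, ← hC, one_div, inv_mul_eq_div]
    have hpℓ : p ℓ < 1 := by
      have h1 : p ℓ ≤ p (ℓ - (Q : ℝ) • x) + p ((Q : ℝ) • x) := by
        calc p ℓ = p (ℓ - (Q : ℝ) • x + (Q : ℝ) • x) := by rw [sub_add_cancel]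
          _ ≤ _ := map_add_le_add p _ _
      have h2 : p ((Q : ℝ) • x) = 0 := by
        rw [map_smul_eq_mul, hx, mul_zero]
      have h3 : C / K < 1 := (div_lt_one hK0').mpr hCK
      linarith
    have hpℓ0 : p ℓ = 0 := by
      obtain ⟨n, hn⟩ := hint ℓ hℓmem
      have hn0 : (0 : ℝ) ≤ (n : ℝ) := hn ▸ apply_nonneg p ℓ
      have hn1 : ((n : ℤ) : ℝ) < 1 := hn ▸ hpℓ
      have : (0 : ℤ) ≤ n := by exact_mod_cast hn0
      have : n < 1 := by exact_mod_cast hn1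
      have : n = 0 := by omega
      rw [hn, this, Int.cast_zero]
    -- the rational approximant
    set w : V := b.equivFun.symm fun i => (Q : ℝ)⁻¹ * (m i : ℝ) with hw
    have hwℓ : w = (Q : ℝ)⁻¹ • ℓ := by
      rw [hw, hℓ, ← LinearEquiv.map_smul]
      congr 1
    have hpw : p w = 0 := by
      rw [hwℓ, map_smul_eq_mul, hpℓ0, mul_zero]
    have hwrat : ∃ cc : ι → ℚ, w = ∑ i, ((cc i : ℚ) : ℝ) • b i := by
      refine ⟨fun i => (m i : ℚ) / (Q : ℚ), ?_⟩
      rw [hw, b.equivFun_symm_apply]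
      refine Finset.sum_congr rfl fun i _ => ?_
      congr 1
      push_cast
      ring
    refine ⟨w, ⟨hpw, hwrat⟩, fun i => ?_⟩
    have hwc : b.equivFun w i = (Q : ℝ)⁻¹ * (m i : ℝ) := by
      rw [hw, b.equivFun.apply_symm_apply]
    rw [hwc]
    have heq : c i - (Q : ℝ)⁻¹ * (m i : ℝ) = (Q : ℝ)⁻¹ * ((Q : ℝ) * c i - m i) := by
      field_simp
    rw [heq, abs_mul, abs_inv, abs_of_pos hQ0']
    have hQ1 : (1 : ℝ) ≤ Q := by exact_mod_cast hQ
    have hinv : (Q : ℝ)⁻¹ ≤ 1 := by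
      rw [inv_le_one_iff₀]; right; exact hQ1
    calc (Q : ℝ)⁻¹ * |(Q : ℝ) * c i - m i| ≤ 1 * |(Q : ℝ) * c i - m i| :=
          mul_le_mul_of_nonneg_right hinv (abs_nonneg _)
      _ < ε := by rw [one_mul]; exact (hm i).trans hKε
  -- main equality
  ext x
  simp only [Set.mem_setOf_eq, SetLike.mem_coe]
  constructor
  · intro hx
    set e := b.equivFun with he
    set W' : Submodule ℝ (ι → ℝ) := (Submodule.span ℝ S).map (e : V →ₗ[ℝ] (ι → ℝ)) with hW'
    have hclosed : IsClosed (W' : Set (ι → ℝ)) := Submodule.closed_of_finiteDimensional W'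
    have hmem : e x ∈ closure (W' : Set (ι → ℝ)) := by
      rw [Metric.mem_closure_iff]
      intro ε hε
      obtain ⟨w, hwS, hcoord⟩ := approx x hx ε hε
      refine ⟨e w, ⟨w, Submodule.subset_span hwS, rfl⟩, ?_⟩
      rw [dist_pi_lt_iff hε]
      intro i
      rw [Real.dist_eq]
      exact hcoord i
    rw [hclosed.closure_eq] at hmem
    obtain ⟨y, hy, hey⟩ := hmem
    have : y = x := e.injective hey
    rwa [this] at hy
  · intro hx
    have hle : Submodule.span ℝ S ≤ nullSp p :=
      Submodule.span_le.mpr fun z hz => hz.1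
    exact hle hx
end
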